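/- Define t_1 = 2 and, for n \ge 2, t_n = (1/(2n+1)) \sum_{i=1}^{n-1} \binom{3n}{3i} t_i t_{n-i}. Then t_n = (3n)! E_{2n-1} / ((2n-1)!(2^{2n}-1)) for all n \ge 1, where E_{2n-1} are the tangent numbers. -/

import Mathlib

open scoped BigOperators

/-- A list of integers is *up-down* (alternating) if it rises, falls, rises, ... -/
def IsUpDown (l : List ℤ) : Prop :=
  ∀ i : ℕ, i + 1 < l.length →
    (Even i → l.getD i 0 < l.getD (i + 1) 0) ∧ (¬ Even i → l.getD (i + 1) 0 < l.getD i 0)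

/-- A list of integers is *down-up* if it falls, rises, falls, ... -/
def IsDownUp (l : List ℤ) : Prop :=
  ∀ i : ℕ, i + 1 < l.length →
    (Even i → l.getD (i + 1) 0 < l.getD i 0) ∧ (¬ Even i → l.getD i 0 < l.getD (i + 1) 0)

/-- The list `[1, 2, ..., m]` as integers. -/
def baseList (m : ℕ) : List ℤ := (List.range m).map fun k => (k : ℤ) + 1

/-- The Euler number `E_m`: the number of up-down permutations of `{1, ..., m}`. -/
noncomputable def eulerNum (m : ℕ) : ℕ :=
  Nat.card {l : List ℤ // l.Perm (baseList m) ∧ IsUpDown l}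

/-!
Put `a n = t n / (3n)!`. Since `C(3n, 3i) (3i)! (3(n-i))! = (3n)!`, the recursion for `t` says
exactly that `τ(x) = ∑ a n x^(2n)` satisfies the Riccati equation `x τ' + τ = τ² + x²`, and the
claim is that `a n (4^n - 1) = E_{2n-1} / (2n-1)!`, i.e. `τ(2x) - τ(x) = x tan x`.

Splitting an up-down permutation of odd length at its maximum gives
`E_{k+1} = ∑_{j odd} C(k, j) E_j E_{k-j}`, so `tan x := ∑ E_{2n-1} x^(2n-1) / (2n-1)!` satisfies
`tan' = 1 + tan²`; comparing linear ODEs gives the double-angle formula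
`tan 2x (1 - tan² x) = 2 tan x`. With it, `D = (1 - τ) tan x - x` satisfies
`(1 - tan² x) D(2x) = 2 D(x)`, which forces `D = 0`, i.e. `τ = 1 - x cot x`. Differentiating
`(1 - τ) tan x = x` gives the Riccati equation.
-/

theorem isUpDown_iff_getElem {l : List ℤ} : IsUpDown l ↔ ∀ i (h : i + 1 < l.length),
    (i % 2 = 0 → l[i] < l[i + 1]) ∧ (i % 2 = 1 → l[i + 1] < l[i]) := by
  refine forall_congr' fun i => forall_congr' fun h => ?_
  simp only [List.getD_eq_getElem _ _ h, List.getD_eq_getElem _ _ (Nat.lt_of_succ_lt h),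
    Nat.even_iff, ← Nat.mod_two_ne_zero]

namespace IsUpDown

theorem of_append_left {L R : List ℤ} (h : IsUpDown (L ++ R)) : IsUpDown L := by
  rw [isUpDown_iff_getElem] at h ⊢
  intro i hi
  have := h i (by simp only [List.length_append]; omega)
  rwa [List.getElem_append_left (Nat.lt_of_succ_lt hi), List.getElem_append_left hi] at this

theorem of_append_right {L R : List ℤ} (h : IsUpDown (L ++ R)) (hL : Even L.length) :
    IsUpDown R := by
  rw [isUpDown_iff_getElem] at h ⊢
  obtain ⟨k, hk⟩ := hL
  intro i hi
  have := h (L.length + i) (by simp only [List.length_append]; omega)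
  simpa [List.getElem_append, add_assoc, Nat.add_mod, hk, ← two_mul] using this

theorem append_cons {L R : List ℤ} {M : ℤ} (hL : IsUpDown L) (hR : IsUpDown R)
    (hodd : Odd L.length) (hLM : ∀ x ∈ L, x < M) (hRM : ∀ x ∈ R, x < M) :
    IsUpDown (L ++ M :: R) := by
  rw [isUpDown_iff_getElem] at hL hR ⊢
  obtain ⟨k, hk⟩ := hodd
  intro i hi
  simp only [List.getElem_append, List.getElem_cons]
  -- only the case with both positions inside `R` survives
  split_ifs <;> first
    | omega
    | exact hL i ‹_›
    | exact ⟨fun _ => hLM _ (List.getElem_mem _), fun _ => by omega⟩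
    | exact ⟨fun _ => by omega, fun _ => hRM _ (List.getElem_mem _)⟩
    | skip
  have e : i + 1 - L.length - 1 = i - L.length - 1 + 1 := by omega
  simp only [e]
  have := hR (i - L.length - 1) (by
    simp only [List.length_append, List.length_cons] at hi; omega)
  exact ⟨fun _ => this.1 (by omega), fun _ => this.2 (by omega)⟩

theorem odd_length_of_append_cons {L R : List ℤ} {M : ℤ} (h : IsUpDown (L ++ M :: R))
    (hLM : ∀ x ∈ L, x ≤ M) (hRM : ∀ x ∈ R, x ≤ M) (hne : L ++ R ≠ []) : Odd L.length := by
  rw [isUpDown_iff_getElem] at h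
  by_contra hodd
  obtain ⟨k, hk⟩ := Nat.not_odd_iff_even.1 hodd
  rcases eq_or_ne L [] with rfl | hL
  · obtain ⟨x, R, rfl⟩ := List.exists_cons_of_ne_nil (by simpa using hne)
    have := (h 0 (by simp)).1 rfl
    simp only [List.nil_append, List.getElem_cons_zero, List.getElem_cons_succ] at this
    linarith [hRM x (by simp)]
  · have hpos := List.length_pos_of_ne_nil hL
    have := (h (L.length - 1) (by
      simp only [List.length_append, List.length_cons]; omega)).2 (by omega)
    have hlast := hLM _ (List.getElem_mem (by omega : L.length - 1 < L.length))
    exact absurd this (by simpa [List.getElem_cons, Nat.sub_add_cancel hpos, hpos] using hlast)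

end IsUpDown

theorem List.perm_iff_nodup_and_toFinset_eq {α : Type*} [DecidableEq α] {l l' : List α}
    (hl' : l'.Nodup) : l.Perm l' ↔ l.Nodup ∧ l.toFinset = l'.toFinset :=
  ⟨fun h => ⟨h.nodup_iff.2 hl', List.toFinset_eq_of_perm _ _ h⟩,
    fun ⟨hl, h⟩ => List.perm_of_nodup_nodup_toFinset_eq hl hl' h⟩

theorem List.take_idxOf_append_cons_drop {α : Type*} [BEq α] [LawfulBEq α] {l : List α} {a : α}
    (h : a ∈ l) : l.take (l.idxOf a) ++ a :: l.drop (l.idxOf a + 1) = l := by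
  have hlt := List.idxOf_lt_length_iff.2 h
  conv_rhs => rw [← List.take_append_drop (l.idxOf a) l,
    List.drop_eq_getElem_cons hlt, List.getElem_idxOf hlt]

-- In `baseList`, `List.range m` is first coerced to `List ℤ` through the list monad.
theorem baseList_eq_map (m : ℕ) : baseList m = (List.range m).map fun k : ℕ => (k : ℤ) + 1 := by
  simp [baseList, ← List.map_eq_flatMap, Function.comp_def]

theorem baseList_nodup (m : ℕ) : (baseList m).Nodup := by
  rw [baseList_eq_map]
  exact List.nodup_range.map fun a b h => by simpa using h

theorem baseList_toFinset (m : ℕ) : (baseList m).toFinset = Finset.Icc 1 (m : ℤ) := by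
  ext x
  simp only [baseList_eq_map, List.mem_toFinset, List.mem_map, List.mem_range, Finset.mem_Icc]
  exact ⟨fun ⟨k, hk, hx⟩ => by omega, fun hx => ⟨(x - 1).toNat, by omega, by omega⟩⟩

theorem Int.card_Icc_one_natCast (n : ℕ) : (Finset.Icc 1 (n : ℤ)).card = n := by simp

open scoped Classical in
noncomputable def upDownArrangements (S : Finset ℤ) : Finset (List ℤ) :=
  S.toList.permutations.toFinset.filter IsUpDown

theorem mem_upDownArrangements {S : Finset ℤ} {l : List ℤ} :
    l ∈ upDownArrangements S ↔ l.Nodup ∧ l.toFinset = S ∧ IsUpDown l := by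
  simp only [upDownArrangements, Finset.mem_filter, List.mem_toFinset, List.mem_permutations,
    List.perm_iff_nodup_and_toFinset_eq S.nodup_toList, Finset.toList_toFinset, and_assoc]

theorem eulerNum_eq_card_upDownArrangements (m : ℕ) :
    eulerNum m = (upDownArrangements (Finset.Icc 1 (m : ℤ))).card := by
  rw [eulerNum, ← Nat.card_eq_finsetCard]
  refine Nat.card_congr (Equiv.subtypeEquivRight fun l => ?_)
  rw [mem_upDownArrangements, List.perm_iff_nodup_and_toFinset_eq (baseList_nodup m),
    baseList_toFinset, and_assoc]

theorem upDownArrangements_singleton (x : ℤ) : upDownArrangements {x} = {[x]} := by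
  ext l
  rw [mem_upDownArrangements, Finset.mem_singleton]
  constructor
  · rintro ⟨hl, hx, -⟩
    obtain ⟨y, rfl⟩ := List.length_eq_one_iff.1 <| by
      rw [← List.toFinset_card_of_nodup hl, hx, Finset.card_singleton]
    simpa using hx
  · rintro rfl
    exact ⟨List.nodup_singleton x, rfl, fun i hi => by simp at hi⟩

theorem eulerNum_one : eulerNum 1 = 1 := by
  rw [eulerNum_eq_card_upDownArrangements, Nat.cast_one, Finset.Icc_self,
    upDownArrangements_singleton, Finset.card_singleton]

section SplitAtMax

variable {S : Finset ℤ} {M : ℤ} {L R : List ℤ}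

theorem append_cons_mem_upDownArrangements {T : Finset ℤ} (hMS : M ∈ S) (hM : ∀ x ∈ S, x ≤ M)
    (hT : T ⊆ S.erase M) (hodd : Odd L.length) (hL : L ∈ upDownArrangements T)
    (hR : R ∈ upDownArrangements (S.erase M \ T)) : L ++ M :: R ∈ upDownArrangements S := by
  obtain ⟨hLnd, rfl, hudL⟩ := mem_upDownArrangements.1 hL
  obtain ⟨hRnd, hRS, hudR⟩ := mem_upDownArrangements.1 hR
  have hLmem : ∀ x ∈ L, x ≠ M ∧ x ∈ S := fun x hx => by
    simpa using hT (List.mem_toFinset.2 hx)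
  have hRmem : ∀ x ∈ R, (x ≠ M ∧ x ∈ S) ∧ x ∉ L := fun x hx => by
    simpa [hRS] using List.mem_toFinset.2 hx
  refine mem_upDownArrangements.2 ⟨?_, ?_, ?_⟩
  · simp only [List.nodup_append, List.nodup_cons, List.mem_cons]
    refine ⟨hLnd, ⟨fun h => (hRmem M h).1.1 rfl, hRnd⟩, ?_⟩
    rintro a ha b (rfl | hb) rfl
    exacts [(hLmem a ha).1 rfl, (hRmem a hb).2 ha]
  · ext x
    simp only [List.mem_toFinset, List.mem_append, List.mem_cons]
    refine ⟨?_, fun hx => ?_⟩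
    · rintro (hx | rfl | hx)
      exacts [(hLmem x hx).2, hMS, (hRmem x hx).1.2]
    · by_cases hxM : x = M
      · exact Or.inr (Or.inl hxM)
      by_cases hxL : x ∈ L
      · exact Or.inl hxL
      · have : x ∈ R.toFinset := by simp [hRS, hxM, hxL, hx]
        exact Or.inr (Or.inr (List.mem_toFinset.1 this))
  · exact hudL.append_cons hudR hodd
      (fun x hx => lt_of_le_of_ne (hM x (hLmem x hx).2) (hLmem x hx).1)
      (fun x hx => lt_of_le_of_ne (hM x (hRmem x hx).1.2) (hRmem x hx).1.1)

theorem of_append_cons_mem_upDownArrangements (hM : ∀ x ∈ S, x ≤ M) (hS : S ≠ {M})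
    (h : L ++ M :: R ∈ upDownArrangements S) :
    Odd L.length ∧ L.toFinset ⊆ S.erase M ∧ L ∈ upDownArrangements L.toFinset ∧
      R ∈ upDownArrangements (S.erase M \ L.toFinset) := by
  obtain ⟨hnd, rfl, hud⟩ := mem_upDownArrangements.1 h
  obtain ⟨hL, ⟨hMR, hR⟩, hdisj⟩ :
      L.Nodup ∧ (M ∉ R ∧ R.Nodup) ∧ ∀ a ∈ L, ∀ b ∈ M :: R, a ≠ b := by
    simpa [List.nodup_append] using hnd
  have hodd : Odd L.length := by
    refine hud.odd_length_of_append_cons (fun x hx => hM x (by simp [hx]))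
      (fun x hx => hM x (by simp [hx])) fun h => hS ?_
    simp_all
  simp only [mem_upDownArrangements, true_and]
  refine ⟨hodd, fun x hx => ?_, ⟨hL, hud.of_append_left⟩, hR, ?_, ?_⟩
  · rw [List.mem_toFinset] at hx
    simpa [hx] using hdisj x hx M (by simp)
  · ext x
    simp only [List.mem_toFinset, Finset.mem_sdiff, Finset.mem_erase, List.mem_append,
      List.mem_cons]
    constructor
    · intro hx
      exact ⟨⟨fun h => hMR (h ▸ hx), by simp [hx]⟩, fun h => hdisj x h x (by simp [hx]) rfl⟩
    · rintro ⟨⟨hxM, (hx | hx | hx)⟩, hxL⟩ <;> simp_all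
  · rw [List.append_cons] at hud
    exact hud.of_append_right (by simpa [Nat.even_add_one] using hodd)

theorem card_upDownArrangements_eq_sum (hMS : M ∈ S) (hM : ∀ x ∈ S, x ≤ M) (hS : S ≠ {M}) :
    (upDownArrangements S).card = ∑ T ∈ (S.erase M).powerset.filter (fun T => Odd T.card),
      (upDownArrangements T).card * (upDownArrangements (S.erase M \ T)).card := by
  have hsplit : ∀ l ∈ upDownArrangements S,
      l.take (l.idxOf M) ++ M :: l.drop (l.idxOf M + 1) = l := fun l hl =>
    List.take_idxOf_append_cons_drop (by simpa [← (mem_upDownArrangements.1 hl).2.1] using hMS)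
  have hcard : ∀ {L : List ℤ}, L ∈ upDownArrangements L.toFinset → L.toFinset.card = L.length :=
    fun hL => List.toFinset_card_of_nodup (mem_upDownArrangements.1 hL).1
  simp only [← Finset.card_product, ← Finset.card_sigma]
  refine Finset.card_nbij'
    (fun l => ⟨(l.take (l.idxOf M)).toFinset, l.take (l.idxOf M), l.drop (l.idxOf M + 1)⟩)
    (fun q => q.2.1 ++ M :: q.2.2) (fun l hl => ?_) (fun ⟨T, L, R⟩ h => ?_)
    (fun l hl => hsplit l hl) (fun ⟨T, L, R⟩ h => ?_)
  all_goals simp only [Finset.mem_coe, Finset.mem_sigma, Finset.mem_filter, Finset.mem_powerset,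
    Finset.mem_product] at *
  · obtain ⟨hodd, hsub, hL, hR⟩ :=
      of_append_cons_mem_upDownArrangements hM hS (by rwa [hsplit l hl])
    exact ⟨⟨hsub, by rwa [hcard hL]⟩, hL, hR⟩
  · obtain ⟨⟨hT, hodd⟩, hL, hR⟩ := h
    obtain rfl : L.toFinset = T := (mem_upDownArrangements.1 hL).2.1
    exact append_cons_mem_upDownArrangements hMS hM hT (by rwa [← hcard hL]) hL hR
  · obtain ⟨⟨hT, -⟩, hL, -⟩ := h
    obtain rfl : L.toFinset = T := (mem_upDownArrangements.1 hL).2.1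
    have hML : M ∉ L := fun hML => by simpa using hT (List.mem_toFinset.2 hML)
    simp [List.idxOf_append_of_notMem hML]

end SplitAtMax

theorem card_upDownArrangements_eq_sum_choose {S : Finset ℤ} {M : ℤ} {k : ℕ} (hMS : M ∈ S)
    (hM : ∀ x ∈ S, x ≤ M) (hk : S.card = k + 1) (hk0 : k ≠ 0) (heven : Even k)
    (ih : ∀ T ⊆ S.erase M, Odd T.card → (upDownArrangements T).card = eulerNum T.card) :
    (upDownArrangements S).card = ∑ j ∈ Finset.range (k + 1),
      k.choose j * if Odd j then eulerNum j * eulerNum (k - j) else 0 := by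
  have hS : S ≠ {M} := by rintro rfl; rw [Finset.card_singleton] at hk; omega
  have hk' : (S.erase M).card = k := by rw [Finset.card_erase_of_mem hMS, hk]; rfl
  calc (upDownArrangements S).card
      = ∑ T ∈ (S.erase M).powerset,
          if Odd T.card then eulerNum T.card * eulerNum (k - T.card) else 0 := by
        rw [card_upDownArrangements_eq_sum hMS hM hS, Finset.sum_filter]
        refine Finset.sum_congr rfl fun T hT => if_ctx_congr Iff.rfl (fun hodd => ?_) fun _ => rfl
        rw [Finset.mem_powerset] at hT
        have hcard : (S.erase M \ T).card = k - T.card := by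
          rw [Finset.card_sdiff_of_subset hT, hk']
        have hodd' : Odd (S.erase M \ T).card :=
          hcard ▸ Nat.Even.sub_odd (hk' ▸ Finset.card_le_card hT) heven hodd
        rw [ih T hT hodd, ih _ Finset.sdiff_subset hodd', hcard]
    _ = _ := by
        rw [Finset.sum_powerset_apply_card
          (fun j => if Odd j then eulerNum j * eulerNum (k - j) else 0), hk']
        simp only [smul_eq_mul]

theorem card_upDownArrangements_of_odd {S : Finset ℤ} (hS : Odd S.card) :
    (upDownArrangements S).card = eulerNum S.card := by
  obtain ⟨n, hn⟩ : ∃ n, S.card = n := ⟨_, rfl⟩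
  induction n using Nat.strong_induction_on generalizing S with
  | _ n ih =>
  obtain ⟨k, rfl⟩ : ∃ k, n = k + 1 := ⟨n - 1, by grind⟩
  rcases eq_or_ne k 0 with rfl | hk0
  · obtain ⟨x, rfl⟩ := Finset.card_eq_one.1 hn
    rw [upDownArrangements_singleton, Finset.card_singleton, Finset.card_singleton, eulerNum_one]
  have heven : Even k := by rw [hn] at hS; simpa [Nat.odd_add_one] using hS
  have ih' : ∀ {S' : Finset ℤ} {M : ℤ}, M ∈ S' → S'.card = k + 1 →
      ∀ T ⊆ S'.erase M, Odd T.card → (upDownArrangements T).card = eulerNum T.card :=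
    fun hM hS' T hT hodd => ih _ (by
      have := Finset.card_le_card hT
      rw [Finset.card_erase_of_mem hM, hS'] at this; omega) hodd rfl
  have hne : S.Nonempty := Finset.card_pos.1 (by omega)
  -- `S` and `{1, ..., k + 1}` are both split at their maximum into smaller odd sets.
  rw [hn, eulerNum_eq_card_upDownArrangements,
    card_upDownArrangements_eq_sum_choose (S.max'_mem hne) (S.le_max' · ·) hn hk0 heven
      (ih' (S.max'_mem hne) hn),
    card_upDownArrangements_eq_sum_choose (M := ((k + 1 : ℕ) : ℤ)) (by simp) (by simp)
      (Int.card_Icc_one_natCast _) hk0 heven (ih' (by simp) (Int.card_Icc_one_natCast _))]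

theorem eulerNum_succ {k : ℕ} (hk0 : k ≠ 0) (heven : Even k) :
    eulerNum (k + 1) = ∑ j ∈ Finset.range (k + 1),
      k.choose j * if Odd j then eulerNum j * eulerNum (k - j) else 0 := by
  rw [eulerNum_eq_card_upDownArrangements]
  exact card_upDownArrangements_eq_sum_choose (M := ((k + 1 : ℕ) : ℤ)) (by simp) (by simp)
    (Int.card_Icc_one_natCast _) hk0 heven fun T _ hT => card_upDownArrangements_of_odd hT

theorem eulerNum_succ_div_factorial {k : ℕ} (hk0 : k ≠ 0) (heven : Even k) :
    (eulerNum (k + 1) : ℚ) / k.factorial = ∑ j ∈ Finset.range (k + 1),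
      if Odd j then (eulerNum j : ℚ) / j.factorial * (eulerNum (k - j) / (k - j).factorial)
      else 0 := by
  rw [eulerNum_succ hk0 heven, Nat.cast_sum, Finset.sum_div]
  refine Finset.sum_congr rfl fun j hj => ?_
  have hjk := Finset.mem_range_succ_iff.1 hj
  have hchoose : (k.choose j : ℚ) ≠ 0 := by exact_mod_cast (Nat.choose_pos hjk).ne'
  split_ifs
  · rw [← Nat.choose_mul_factorial_mul_factorial hjk]
    push_cast
    field_simp
  · simp

open PowerSeries

namespace PowerSeries

open Finset

theorem constantCoeff_rescale {R : Type*} [CommSemiring R] (a : R) (f : R⟦X⟧) :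
    constantCoeff (rescale a f) = constantCoeff f := by
  rw [← coeff_zero_eq_constantCoeff_apply, coeff_rescale, pow_zero, one_mul,
    coeff_zero_eq_constantCoeff_apply]

theorem derivative_rescale {R : Type*} [CommSemiring R] (a : R) (f : R⟦X⟧) :
    d⁄dX R (rescale a f) = C a * rescale a (d⁄dX R f) := by
  ext n
  simp only [coeff_derivative, coeff_rescale, coeff_C_mul]
  ring

theorem eq_zero_of_derivative_eq_mul {R : Type*} [CommRing R] [IsAddTorsionFree R]
    {f g : R⟦X⟧} (h0 : constantCoeff f = 0) (h : d⁄dX R f = g * f) : f = 0 := by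
  ext n
  induction n using Nat.strong_induction_on with
  | _ n ih =>
  rcases n with _ | n
  · simpa using h0
  have hn := congrArg (coeff n) h
  rw [coeff_mul, sum_eq_zero fun p hp => by
    rw [ih p.2 (by have := HasAntidiagonal.mem_antidiagonal.1 hp; omega), map_zero, mul_zero],
    coeff_derivative, mul_comm, ← Nat.cast_succ, ← nsmul_eq_mul, ← nsmul_zero (n + 1)] at hn
  simpa using nsmul_right_injective (Nat.succ_ne_zero n) hn

theorem eq_zero_of_mul_rescale_two {K : Type*} [Field K] [CharZero K] {f g : K⟦X⟧}
    (hg : constantCoeff g = 0) (h1 : coeff 1 f = 0) (h : (1 - g) * rescale 2 f = 2 * f) :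
    f = 0 := by
  ext n
  induction n using Nat.strong_induction_on with
  | _ n ih =>
  rcases eq_or_ne n 1 with rfl | hn1
  · simpa using h1
  have hn := congrArg (coeff n) h
  rw [sub_mul, one_mul, map_sub, coeff_mul, sum_eq_zero fun p hp => ?_, sub_zero,
    coeff_rescale, ← map_ofNat C 2, coeff_C_mul] at hn
  · have h2 : (2 : K) ^ n ≠ 2 := fun h2 =>
      hn1 (Nat.pow_right_injective le_rfl (by exact_mod_cast h2.trans (pow_one (2 : K)).symm))
    have : ((2 : K) ^ n - 2) * coeff n f = 0 := by linear_combination hn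
    simpa [sub_eq_zero, h2] using this
  · rcases eq_or_ne p.1 0 with h0 | h0
    · simp [h0, hg]
    · rw [coeff_rescale, ih p.2 (by have := HasAntidiagonal.mem_antidiagonal.1 hp; omega)]
      simp

theorem coeff_two_mul_mul {R : Type*} [CommSemiring R] {f : R⟦X⟧}
    (hf : ∀ m, coeff (2 * m + 1) f = 0) (g : R⟦X⟧) (n : ℕ) :
    coeff (2 * n) (f * g) =
      ∑ p ∈ antidiagonal n, coeff (2 * p.1) f * coeff (2 * p.2) g := by
  rw [coeff_mul]
  symm
  refine sum_of_injOn (fun p => (2 * p.1, 2 * p.2)) (fun p _ q _ h => ?_)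
    (fun p hp => ?_) (fun i hi hnot => ?_) fun _ _ => rfl
  · simp only [Prod.ext_iff] at h ⊢; omega
  · simp only [mem_coe, HasAntidiagonal.mem_antidiagonal] at hp ⊢
    omega
  · rw [HasAntidiagonal.mem_antidiagonal] at hi
    obtain ⟨m, hm | hm⟩ := Nat.even_or_odd' i.1
    · exact absurd ⟨(m, n - m), by rw [mem_coe, HasAntidiagonal.mem_antidiagonal]; omega,
        Prod.ext (by dsimp only; omega) (by dsimp only; omega)⟩ hnot
    · rw [hm, hf, zero_mul]

end PowerSeries

noncomputable def tanSeries : ℚ⟦X⟧ :=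
  mk fun n => if Odd n then (eulerNum n : ℚ) / n.factorial else 0

theorem coeff_tanSeries (n : ℕ) :
    coeff n tanSeries = if Odd n then (eulerNum n : ℚ) / n.factorial else 0 :=
  coeff_mk _ _

theorem constantCoeff_tanSeries : constantCoeff tanSeries = 0 := by
  simp [← coeff_zero_eq_constantCoeff_apply, coeff_tanSeries]

theorem derivative_tanSeries : d⁄dX ℚ tanSeries = 1 + tanSeries ^ 2 := by
  ext k
  rw [coeff_derivative, map_add, coeff_one, sq, coeff_mul,
    Finset.Nat.sum_antidiagonal_eq_sum_range_succ
      (fun i j => coeff i tanSeries * coeff j tanSeries)]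
  simp only [coeff_tanSeries]
  rcases Nat.even_or_odd k with heven | hodd
  · rcases eq_or_ne k 0 with rfl | hk0
    · simp [eulerNum_one]
    have hfact : (eulerNum (k + 1) : ℚ) / (k + 1).factorial * (k + 1) =
        eulerNum (k + 1) / k.factorial := by
      rw [Nat.factorial_succ]; push_cast; field_simp
    rw [if_pos heven.add_one, if_neg hk0, zero_add, hfact, eulerNum_succ_div_factorial hk0 heven]
    refine Finset.sum_congr rfl fun j hj => ?_
    have : Odd (k - j) ↔ Odd j := by
      rw [Nat.odd_sub (Finset.mem_range_succ_iff.1 hj)]; simp [Nat.not_odd_iff_even.2 heven]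
    by_cases hj : Odd j <;> simp [hj, this]
  · rw [if_neg (by simpa [Nat.odd_add_one] using hodd), zero_mul,
      if_neg (by rintro rfl; simp at hodd), zero_add]
    refine (Finset.sum_eq_zero fun j hj => ?_).symm
    have : Odd (k - j) ↔ ¬Odd j := by
      rw [Nat.odd_sub (Finset.mem_range_succ_iff.1 hj)]; simp [hodd]
    by_cases hj : Odd j <;> simp [hj, this]

-- `D = tan 2x (1 - tan² x) - 2 tan x` satisfies `D' = 2 (tan 2x + tan x) D` and `D(0) = 0`.
theorem rescale_two_tanSeries_mul :
    rescale 2 tanSeries * (1 - tanSeries ^ 2) = 2 * tanSeries := by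
  refine sub_eq_zero.1 (eq_zero_of_derivative_eq_mul (g := 2 * (rescale 2 tanSeries + tanSeries))
    (by simp [constantCoeff_rescale, constantCoeff_tanSeries]) ?_)
  have h2 : d⁄dX ℚ (2 : ℚ⟦X⟧) = 0 := Derivation.map_natCast _ 2
  simp only [map_sub, Derivation.leibniz, derivative_rescale, derivative_tanSeries,
    sq, map_add, map_one, map_mul, smul_eq_mul, map_ofNat, h2, Derivation.map_one_eq_zero]
  ring

-- `τ(2x) - τ(x) = x tan x`, so `τ = 1 - x cot x`; the constant coefficient is the junk `0 / 0`.
noncomputable def tauSeries : ℚ⟦X⟧ :=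
  mk fun n => coeff (n - 1) tanSeries / (2 ^ n - 1)

theorem coeff_tauSeries (n : ℕ) :
    coeff n tauSeries = coeff (n - 1) tanSeries / (2 ^ n - 1) :=
  coeff_mk _ _

theorem constantCoeff_tauSeries : constantCoeff tauSeries = 0 := by
  rw [← coeff_zero_eq_constantCoeff_apply, coeff_tauSeries]
  simp

theorem coeff_tauSeries_odd (m : ℕ) : coeff (2 * m + 1) tauSeries = 0 := by
  simp [coeff_tauSeries, coeff_tanSeries]

theorem coeff_tauSeries_two_mul {n : ℕ} (hn : n ≠ 0) :
    coeff (2 * n) tauSeries =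
      (eulerNum (2 * n - 1) : ℚ) / ((2 * n - 1).factorial * (2 ^ (2 * n) - 1)) := by
  rw [coeff_tauSeries, coeff_tanSeries, if_pos (by rw [Nat.odd_sub (by omega)]; simp), div_div]

theorem rescale_two_tauSeries : rescale 2 tauSeries = tauSeries + X * tanSeries := by
  ext (_ | n)
  · simp [constantCoeff_tauSeries]
  · have h : (2 : ℚ) ^ (n + 1) - 1 ≠ 0 := by
      rw [sub_ne_zero]; exact one_lt_pow₀ one_lt_two n.succ_ne_zero |>.ne'
    rw [coeff_rescale, map_add, coeff_succ_X_mul, coeff_tauSeries, Nat.add_sub_cancel]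
    field_simp
    ring

theorem one_sub_tauSeries_mul_tanSeries : (1 - tauSeries) * tanSeries = X := by
  refine sub_eq_zero.1 (eq_zero_of_mul_rescale_two (g := tanSeries ^ 2)
    (by simp [constantCoeff_tanSeries]) ?_ ?_)
  · simp [coeff_mul, Finset.Nat.antidiagonal_succ, coeff_tanSeries, coeff_one, coeff_X,
      eulerNum_one, constantCoeff_tauSeries]
  · rw [map_sub, map_mul, map_sub, map_one, rescale_two_tauSeries, rescale_X, map_ofNat]
    linear_combination (1 - tauSeries - X * tanSeries) * rescale_two_tanSeries_mul

theorem X_mul_derivative_tauSeries :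
    X * d⁄dX ℚ tauSeries + tauSeries = tauSeries ^ 2 + X ^ 2 := by
  have h := one_sub_tauSeries_mul_tanSeries
  have hd := congrArg (d⁄dX ℚ) h
  simp only [Derivation.leibniz, derivative_tanSeries, map_sub, Derivation.map_one_eq_zero,
    derivative_X, smul_eq_mul] at hd
  linear_combination (tauSeries - 1) * hd +
    ((1 - tauSeries) * tanSeries + X - d⁄dX ℚ tauSeries) * h

theorem coeff_tauSeries_rec {n : ℕ} (hn : 2 ≤ n) :
    (2 * n + 1) * coeff (2 * n) tauSeries =
      ∑ i ∈ Finset.Icc 1 (n - 1), coeff (2 * i) tauSeries * coeff (2 * (n - i)) tauSeries := by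
  have h := congrArg (coeff (2 * n)) X_mul_derivative_tauSeries
  obtain ⟨m, hm⟩ : ∃ m, 2 * n = m + 1 := ⟨2 * n - 1, by omega⟩
  rw [map_add, map_add, sq, coeff_two_mul_mul coeff_tauSeries_odd, coeff_X_pow,
    if_neg (by omega), add_zero, hm, coeff_succ_X_mul, coeff_derivative, ← hm,
    Finset.Nat.sum_antidiagonal_eq_sum_range_succ
      (fun i j => coeff (2 * i) tauSeries * coeff (2 * j) tauSeries)] at h
  have hm' : (m : ℚ) + 1 = 2 * n := by exact_mod_cast hm.symm
  rw [Finset.sum_subset (s₂ := Finset.range n.succ), ← h, hm']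
  · ring
  · intro i; simp only [Finset.mem_Icc, Finset.mem_range]; omega
  · intro i hi hi'
    simp only [Finset.mem_range, Finset.mem_Icc, not_and_or, not_le] at hi hi'
    obtain rfl | rfl : i = 0 ∨ i = n := by omega
    all_goals simp [constantCoeff_tauSeries]

theorem Nat.cast_choose_mul_factorial_mul_factorial_mul {R : Type*} [CommSemiring R] {n k : ℕ}
    (hk : k ≤ n) (x y : R) :
    (n.choose k : R) * (k.factorial * x) * ((n - k).factorial * y) = n.factorial * (x * y) := by
  rw [← Nat.choose_mul_factorial_mul_factorial hk]
  push_cast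
  ring

/-- The recursion for t_n = f^{τ_{3n}} determines t_n = (3n)! E_{2n-1} / ((2n-1)!(2^{2n}-1)). -/
theorem tau_count (t : ℕ → ℚ) (h1 : t 1 = 2)
    (hrec : ∀ n : ℕ, 2 ≤ n →
      t n = (1 / (2 * (n : ℚ) + 1)) *
        ∑ i ∈ Finset.Icc 1 (n - 1), (Nat.choose (3 * n) (3 * i) : ℚ) * t i * t (n - i)) :
    ∀ n : ℕ, 1 ≤ n →
      t n = ((3 * n).factorial : ℚ) * (eulerNum (2 * n - 1) : ℚ) /
        (((2 * n - 1).factorial : ℚ) * (2 ^ (2 * n) - 1)) := by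
  have key (n : ℕ) (hn : 1 ≤ n) : t n = (3 * n).factorial * coeff (2 * n) tauSeries := by
    induction n using Nat.strong_induction_on with
    | _ n ih =>
    rcases eq_or_lt_of_le hn with rfl | hn2
    · rw [h1, coeff_tauSeries_two_mul one_ne_zero]
      norm_num [eulerNum_one, Nat.factorial]
    have hterm : ∀ i ∈ Finset.Icc 1 (n - 1), ((3 * n).choose (3 * i) : ℚ) * t i * t (n - i) =
        (3 * n).factorial * (coeff (2 * i) tauSeries * coeff (2 * (n - i)) tauSeries) := by
      intro i hi
      rw [Finset.mem_Icc] at hi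
      rw [ih i (by omega) hi.1, ih (n - i) (by omega) (by omega), Nat.mul_sub]
      exact Nat.cast_choose_mul_factorial_mul_factorial_mul (by omega) _ _
    rw [hrec n hn2, Finset.sum_congr rfl hterm, ← Finset.mul_sum, ← coeff_tauSeries_rec hn2]
    field_simp
  intro n hn
  rw [key n hn, coeff_tauSeries_two_mul (by omega), mul_div_assoc]
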